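/- Generic fine-scale threshold lower bound: there exist a constant c' > 0 and a threshold T_0 such that the following holds for all integers T ≥ T_0. Let m be a power of two with 2 ≤ m ≤ T^{1/3}, define grid points x_i := 1/4 + (i-1)/(2(m-1)) for i ∈ {1,...,m}, contexts x^{ctx}_t := x_{1+((t-1) mod m)} and means μ_t := x^{ctx}_t for t ∈ {1,...,T}. Let d_max := ⌊(1/2) log₂ T⌋ + 1 and w_d := 2^{-d}. For ANY finite family Ḡ of functions from [0,1] to {0,1}, define, for each depth 0 ≤ d ≤ d_max, M_d := inf { ∑_{S∈P} B_S K_S }, where the infimum ranges over partitions P of {1,...,T} into nonempty contiguous blocks together with, for each block S ∈ P, a score f_S : [0,1] → [0,1] that is (K_S, B_S, 1/4)-threshold representable on S with respect to Ḡ and satisfies |μ_t - f_S(x^{ctx}_t)| ≤ w_d for all t ∈ S (with the convention that the infimum over the empty set is +∞). Then ∑_{d=0}^{d_max} M_d ≥ c' · m · log T. -/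

import Mathlib

open scoped ENNReal

/-- A score `f : X → [0,1]` is `(K, B, η)`-threshold representable on a finite index set `S`
with contexts `x : ι → X`, with respect to a finite family `G` of group functions. -/
def ThresholdRep {X : Type*} {ι : Type*} (G : Finset (X → ℝ)) (S : Finset ι) (x : ι → X)
    (f : X → ℝ) (K : ℕ) (B η : ℝ) : Prop :=
  (S.image fun t => f (x t)).card ≤ K ∧
  ∀ r ∈ Set.Icc (0 : ℝ) 1, ∃ α : (X → ℝ) → ℝ,
    (∑ g ∈ G, |α g|) ≤ B ∧
    ∀ t ∈ S,
      (r ≤ f (x t) → 1 - η ≤ ∑ g ∈ G, α g * g (x t)) ∧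
      (f (x t) < r → (∑ g ∈ G, α g * g (x t)) ≤ -(1 - η))

/-- The round-robin ordered-grid context at time `t ∈ {1, ..., T}` for grid size `m`:
`x_i = 1/4 + (i-1)/(2(m-1))` with `i = 1 + ((t-1) mod m)`. -/
noncomputable def gridCtx (m : ℕ) (t : ℕ) : ℝ :=
  1 / 4 + (((t - 1) % m : ℕ) : ℝ) / (2 * ((m : ℝ) - 1))

/-- `depthCost G T m w` is the exact threshold complexity `M_d` at scale `w`: the infimum,
over partitions of `{1, ..., T}` into nonempty contiguous blocks equipped on each block with a
`(K_S, B_S, 1/4)`-threshold-representable score approximating the grid means within `w`, of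
`∑_S B_S K_S` (in the extended nonnegative reals, so the infimum over the empty set is `∞`). -/
noncomputable def depthCost (G : Finset (ℝ → ℝ)) (T m : ℕ) (w : ℝ) : ℝ≥0∞ :=
  sInf { cost : ℝ≥0∞ |
    ∃ (J : ℕ) (τ : ℕ → ℕ) (f : ℕ → ℝ → ℝ) (K : ℕ → ℕ) (B : ℕ → ℝ),
      1 ≤ J ∧ τ 0 = 1 ∧ τ J = T + 1 ∧ (∀ j < J, τ j < τ (j + 1)) ∧
      (∀ j < J, ∀ u : ℝ, f j u ∈ Set.Icc (0 : ℝ) 1) ∧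
      (∀ j < J,
        ThresholdRep G (Finset.Ico (τ j) (τ (j + 1))) (gridCtx m) (f j) (K j) (B j) (1 / 4)) ∧
      (∀ j < J, ∀ t ∈ Finset.Ico (τ j) (τ (j + 1)),
        |gridCtx m t - f j (gridCtx m t)| ≤ w) ∧
      cost = ENNReal.ofReal (∑ j ∈ Finset.range J, B j * K j) }

lemma min_sub_le_sum (τ : ℕ → ℕ) (m : ℕ) (J : ℕ) :
    min (τ J - τ 0) m ≤ ∑ j ∈ Finset.range J, min (τ (j+1) - τ j) m := by
  induction J with
  | zero => simp
  | succ n ih =>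
    rw [Finset.sum_range_succ]
    have h : min (τ (n+1) - τ 0) m ≤ min (τ n - τ 0) m + min (τ (n+1) - τ n) m := by omega
    omega

lemma mod_injOn (a n m : ℕ) (hn : n ≤ m) (ha : 1 ≤ a) :
    Set.InjOn (fun t => (t - 1) % m) (Finset.Ico a (a + n) : Finset ℕ) := by
  intro t ht s hs h
  simp only [Finset.coe_Ico, Set.mem_Ico] at ht hs
  simp only at h
  rcases le_total t s with hts | hts
  · have hd : m ∣ (s - 1) - (t - 1) := (Nat.modEq_iff_dvd' (by omega)).mp h
    have := Nat.eq_zero_of_dvd_of_lt hd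
    omega
  · have hd : m ∣ (t - 1) - (s - 1) := (Nat.modEq_iff_dvd' (by omega)).mp h.symm
    have := Nat.eq_zero_of_dvd_of_lt hd
    omega

lemma card_bound (m : ℕ) (hm : 2 ≤ m) (a b : ℕ) (ha1 : 1 ≤ a) (hab : a < b)
    (F : ℝ → ℝ) (w : ℝ) (hw2 : 2 * w < 1 / (2 * ((m : ℝ) - 1)))
    (happ : ∀ t ∈ Finset.Ico a b, |gridCtx m t - F (gridCtx m t)| ≤ w) :
    min (b - a) m ≤ ((Finset.Ico a b).image fun t => F (gridCtx m t)).card := by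
  have hmR : (2 : ℝ) ≤ m := by exact_mod_cast hm
  have hDpos : (0 : ℝ) < 2 * ((m : ℝ) - 1) := by linarith
  set n := min (b - a) m with hn
  have hsub : Finset.Ico a (a + n) ⊆ Finset.Ico a b :=
    Finset.Ico_subset_Ico le_rfl (by omega)
  have hinj : Set.InjOn (fun t => F (gridCtx m t)) (Finset.Ico a (a + n) : Finset ℕ) := by
    intro t ht s hs hfe
    have hfe' : F (gridCtx m t) = F (gridCtx m s) := hfe
    have htS : t ∈ Finset.Ico a b := hsub (by simpa using ht)
    have hsS : s ∈ Finset.Ico a b := hsub (by simpa using hs)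
    have hmodeq : (t - 1) % m = (s - 1) % m := by
      by_contra hne
      have hz : (((t - 1) % m : ℕ) : ℤ) ≠ (((s - 1) % m : ℕ) : ℤ) := by exact_mod_cast hne
      have h1 : (1 : ℝ) ≤ |(((t - 1) % m : ℕ) : ℝ) - (((s - 1) % m : ℕ) : ℝ)| := by
        have h2 := Int.one_le_abs (sub_ne_zero.mpr hz)
        calc (1 : ℝ) ≤ ((|(((t - 1) % m : ℕ) : ℤ) - (((s - 1) % m : ℕ) : ℤ)| : ℤ) : ℝ) := by
              exact_mod_cast h2
          _ = _ := by push_cast; rfl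
      have hdiff : gridCtx m t - gridCtx m s
          = ((((t - 1) % m : ℕ) : ℝ) - (((s - 1) % m : ℕ) : ℝ)) / (2 * ((m : ℝ) - 1)) := by
        unfold gridCtx; ring
      have hgapR : 1 / (2 * ((m : ℝ) - 1)) ≤ |gridCtx m t - gridCtx m s| := by
        rw [hdiff, abs_div, abs_of_pos hDpos]
        gcongr
      have hclose : |gridCtx m t - gridCtx m s| ≤ 2 * w := by
        have e : gridCtx m t - gridCtx m s
            = (gridCtx m t - F (gridCtx m t)) - (gridCtx m s - F (gridCtx m s)) := by
          rw [hfe']; ring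
        have := abs_sub (gridCtx m t - F (gridCtx m t)) (gridCtx m s - F (gridCtx m s))
        have h2 := happ t htS
        have h3 := happ s hsS
        rw [e]
        linarith
      linarith
    exact mod_injOn a n m (min_le_right _ _) ha1 ht hs hmodeq
  have hcard1 : ((Finset.Ico a (a + n)).image fun t => F (gridCtx m t)).card = n := by
    rw [Finset.card_image_of_injOn hinj, Nat.card_Ico]
    omega
  calc n = _ := hcard1.symm
    _ ≤ _ := Finset.card_le_card (Finset.image_subset_image hsub)

lemma depthCost_lb (G : Finset (ℝ → ℝ)) (hG : ∀ g ∈ G, ∀ u : ℝ, g u = 0 ∨ g u = 1)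
    (T m : ℕ) (hm : 2 ≤ m) (hmT : m ≤ T) (w : ℝ)
    (hw2 : 2 * w < 1 / (2 * ((m : ℝ) - 1))) :
    ENNReal.ofReal ((3/4 : ℝ) * m) ≤ depthCost G T m w := by
  refine le_sInf ?_
  rintro cost ⟨J, τ, f, K, B, hJ, hτ0, hτJ, hmono, hrange, hrep, happrox, rfl⟩
  refine ENNReal.ofReal_le_ofReal ?_
  have hτpos : ∀ j, j ≤ J → 1 ≤ τ j := by
    intro j hj
    induction j with
    | zero => omega
    | succ n ih =>
      have h1 := hmono n (by omega)
      have h2 := ih (by omega)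
      omega
  have hB : ∀ j < J, (3/4 : ℝ) ≤ B j := by
    intro j hj
    obtain ⟨hKc, hrep'⟩ := hrep j hj
    obtain ⟨α, hα, hsep⟩ := hrep' 0 ⟨le_refl 0, by norm_num⟩
    have ht : τ j ∈ Finset.Ico (τ j) (τ (j+1)) :=
      Finset.mem_Ico.mpr ⟨le_refl _, hmono j hj⟩
    have h1 := (hsep (τ j) ht).1 ((hrange j hj (gridCtx m (τ j))).1)
    have h2 : ∑ g ∈ G, α g * g (gridCtx m (τ j)) ≤ ∑ g ∈ G, |α g| := by
      refine Finset.sum_le_sum fun g hg => ?_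
      rcases hG g hg (gridCtx m (τ j)) with h | h <;> rw [h]
      · simpa using abs_nonneg (α g)
      · rw [mul_one]; exact le_abs_self _
    norm_num at h1
    linarith
  have hK : ∀ j < J, ((min (τ (j+1) - τ j) m : ℕ) : ℝ) ≤ (K j : ℝ) := by
    intro j hj
    obtain ⟨hKc, _⟩ := hrep j hj
    have h1 := card_bound m hm (τ j) (τ (j+1)) (hτpos j (le_of_lt hj)) (hmono j hj)
      (f j) w hw2 (happrox j hj)
    exact_mod_cast le_trans h1 hKc
  have hsum : (m : ℝ) ≤ ∑ j ∈ Finset.range J, ((min (τ (j+1) - τ j) m : ℕ) : ℝ) := by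
    have h1 := min_sub_le_sum τ m J
    have h2 : m ≤ ∑ j ∈ Finset.range J, min (τ (j+1) - τ j) m := by
      have he : τ J - τ 0 = T := by omega
      rw [he] at h1
      omega
    calc (m : ℝ) ≤ ((∑ j ∈ Finset.range J, min (τ (j+1) - τ j) m : ℕ) : ℝ) := by
          exact_mod_cast h2
      _ = _ := by push_cast; rfl
  have hterm : ∀ j ∈ Finset.range J,
      (3/4 : ℝ) * ((min (τ (j+1) - τ j) m : ℕ) : ℝ) ≤ B j * (K j : ℝ) := by
    intro j hj
    have hj' := Finset.mem_range.mp hj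
    exact mul_le_mul (hB j hj') (hK j hj') (by positivity)
      (le_trans (by norm_num) (hB j hj'))
  have h3 := Finset.sum_le_sum hterm
  rw [← Finset.mul_sum] at h3
  linarith

/-- **Generic fine-scale threshold lower bound.** There exist `c' > 0` and `T₀` such that
for all `T ≥ T₀`, every power of two `m` with `2 ≤ m ≤ T^{1/3}`, and ANY finite binary
family `G` on the reals, the exact multiscale threshold complexity of the ordered-grid
instance satisfies `∑_{d=0}^{d_max} M_d ≥ c' m log T`, where `d_max = ⌊(1/2) log₂ T⌋ + 1`
and `M_d` is the depth-`d` cost at scale `w_d = 2^{-d}`. -/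
theorem generic_fine_scale_threshold_lower_bound :
    ∃ c' : ℝ, 0 < c' ∧ ∃ T₀ : ℕ, ∀ T : ℕ, T₀ ≤ T →
      ∀ m : ℕ, (∃ k : ℕ, m = 2 ^ k) → 2 ≤ m → (m : ℝ) ≤ (T : ℝ) ^ ((1 : ℝ) / 3) →
        ∀ G : Finset (ℝ → ℝ), (∀ g ∈ G, ∀ u : ℝ, g u = 0 ∨ g u = 1) →
          ENNReal.ofReal (c' * m * Real.log T) ≤
            ∑ d ∈ Finset.range ((⌊(1 / 2 : ℝ) * Real.logb 2 (T : ℝ)⌋₊ + 1) + 1),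
              depthCost G T m (((2 : ℝ) ^ d)⁻¹) := by
  refine ⟨1/16, by norm_num, 2^24, fun T hT m hmk2 hm2 hm13 G hG => ?_⟩
  obtain ⟨k, hmk⟩ := hmk2
  set L : ℝ := Real.logb 2 T with hLdef
  set D : ℕ := ⌊(1 / 2 : ℝ) * L⌋₊ + 1 with hDdef
  have hT24 : ((2:ℝ))^(24:ℕ) ≤ T := by exact_mod_cast hT
  have hT1 : (1:ℝ) ≤ T := le_trans (by norm_num) hT24
  have hT0 : (0:ℝ) < T := by linarith
  -- m ≤ T
  have hmT : m ≤ T := by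
    have h1 : (m:ℝ) ≤ (T:ℝ) ^ ((1:ℝ)) := by
      calc (m:ℝ) ≤ (T:ℝ) ^ ((1:ℝ)/3) := hm13
        _ ≤ (T:ℝ) ^ (1:ℝ) := Real.rpow_le_rpow_of_exponent_le hT1 (by norm_num)
    rw [Real.rpow_one] at h1
    exact_mod_cast h1
  have hmR : (2:ℝ) ≤ m := by exact_mod_cast hm2
  -- L ≥ 24
  have hL24 : (24:ℝ) ≤ L := by
    have h1 : Real.logb 2 ((2:ℝ)^(24:ℕ)) ≤ Real.logb 2 T :=
      Real.logb_le_logb_of_le (by norm_num) (by positivity) hT24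
    have h2 : Real.logb 2 ((2:ℝ)^(24:ℕ)) = 24 := by
      rw [Real.logb, Real.log_pow]
      have := Real.log_pos (by norm_num : (1:ℝ) < 2)
      field_simp
      norm_num
    rw [h2] at h1
    exact h1
  have hL0 : (0:ℝ) ≤ L := by linarith
  -- k ≤ L/3
  have hkL : (k:ℝ) ≤ L / 3 := by
    have h1 : Real.logb 2 ((2:ℝ)^(k:ℕ)) ≤ Real.logb 2 ((T:ℝ) ^ ((1:ℝ)/3)) := by
      refine Real.logb_le_logb_of_le (by norm_num) (by positivity) ?_
      calc ((2:ℝ)^(k:ℕ)) = (m:ℝ) := by rw [hmk]; push_cast; ring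
        _ ≤ _ := hm13
    have h2 : Real.logb 2 ((2:ℝ)^(k:ℕ)) = k := by
      rw [Real.logb, Real.log_pow]
      have := Real.log_pos (by norm_num : (1:ℝ) < 2)
      field_simp
    have h3 : Real.logb 2 ((T:ℝ) ^ ((1:ℝ)/3)) = (1/3) * L := by
      rw [Real.logb, Real.log_rpow hT0, hLdef, Real.logb]
      ring
    rw [h2, h3] at h1
    linarith
  -- D ≥ L/2
  have hDL : L / 2 ≤ (D:ℝ) := by
    have h1 : (1/2:ℝ) * L < ↑⌊(1 / 2 : ℝ) * L⌋₊ + 1 := Nat.lt_floor_add_one _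
    have h2 : ((D:ℕ):ℝ) = ↑⌊(1 / 2 : ℝ) * L⌋₊ + 1 := by rw [hDdef]; push_cast; ring
    rw [h2]
    linarith
  -- k + 3 ≤ D + 1 and N
  have hkD : k + 3 ≤ D + 1 := by
    have : (k:ℝ) + 3 ≤ (D:ℝ) + 1 := by linarith
    exact_mod_cast this
  set N : ℕ := (D + 1) - (k + 3) with hNdef
  have hNR : L / 12 ≤ (N:ℝ) := by
    have h1 : (N:ℝ) = (D:ℝ) + 1 - ((k:ℝ) + 3) := by
      rw [hNdef, Nat.cast_sub hkD]
      push_cast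
      ring
    rw [h1]
    linarith
  -- per-depth bound
  have hstep : ∀ d ∈ Finset.Ico (k+3) (D+1),
      ENNReal.ofReal ((3/4 : ℝ) * m) ≤ depthCost G T m (((2 : ℝ) ^ d)⁻¹) := by
    intro d hd
    have hd3 : k + 3 ≤ d := (Finset.mem_Ico.mp hd).1
    have hpd : (0:ℝ) < 2^d := by positivity
    have h8m : (8:ℝ) * m ≤ 2^d := by
      calc (8:ℝ) * m = 2^(k+3) := by
            rw [hmk]; push_cast; rw [pow_add]; ring
        _ ≤ 2^d := pow_le_pow_right₀ (by norm_num) hd3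
    have hmpos : (0:ℝ) < 4 * m := by linarith
    have h1 : 2 * ((2:ℝ)^d)⁻¹ ≤ 1 / (4 * m) := by
      rw [← div_eq_mul_inv]
      calc (2:ℝ) / 2^d ≤ 2 / (8 * m) := by
            apply div_le_div_of_nonneg_left (by norm_num) (by linarith) h8m
        _ = 1 / (4 * m) := by ring
    have h2 : 1 / (4 * (m:ℝ)) < 1 / (2 * ((m:ℝ) - 1)) :=
      one_div_lt_one_div_of_lt (by linarith) (by linarith)
    exact depthCost_lb G hG T m hm2 hmT _ (by linarith)
  -- assemble
  have hsub : Finset.Ico (k+3) (D+1) ⊆ Finset.range (D+1) := by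
    intro d hd
    simp only [Finset.mem_Ico] at hd
    simp only [Finset.mem_range]
    omega
  have hchain : (N:ℝ≥0∞) * ENNReal.ofReal ((3/4 : ℝ) * m) ≤
      ∑ d ∈ Finset.range (D+1), depthCost G T m (((2 : ℝ) ^ d)⁻¹) := by
    calc (N:ℝ≥0∞) * ENNReal.ofReal ((3/4 : ℝ) * m)
        = ∑ _d ∈ Finset.Ico (k+3) (D+1), ENNReal.ofReal ((3/4 : ℝ) * m) := by
          rw [Finset.sum_const, Nat.card_Ico, nsmul_eq_mul]
      _ ≤ ∑ d ∈ Finset.Ico (k+3) (D+1), depthCost G T m (((2 : ℝ) ^ d)⁻¹) :=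
          Finset.sum_le_sum hstep
      _ ≤ _ := Finset.sum_le_sum_of_subset hsub
  refine le_trans ?_ hchain
  rw [show ((N:ℝ≥0∞)) = ENNReal.ofReal (N:ℝ) by simp,
    ← ENNReal.ofReal_mul (Nat.cast_nonneg N)]
  refine ENNReal.ofReal_le_ofReal ?_
  -- final real inequality
  have hlog2pos : (0:ℝ) < Real.log 2 := Real.log_pos (by norm_num)
  have hlogT : Real.log T ≤ L := by
    have he : L * Real.log 2 = Real.log T := by
      rw [hLdef, Real.logb]
      field_simp
    have hle : Real.log 2 ≤ 1 := by
      have := Real.log_two_lt_d9; linarith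
    nlinarith
  have hm0 : (0:ℝ) ≤ m := by linarith
  have f1 : (m:ℝ) * Real.log T ≤ (m:ℝ) * L := mul_le_mul_of_nonneg_left hlogT hm0
  have f2 : (L/12) * (m:ℝ) ≤ (N:ℝ) * m := mul_le_mul_of_nonneg_right hNR hm0
  nlinarith
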